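/- Suppose f : {0,1}^n → {0,1} has certificate complexity at most k, and let T be a complete decision tree of depth d such that at each internal node v, the queried variable has influence on the restricted function f_v at least (1/2)·MaxInf(f_v). Define φ(t) as the average total influence of the restricted functions at the depth-t nodes of T (uniform over the 2^t root-to-depth-t paths). Then φ(t) ≤ φ(t−1)·(1 − 1/(2k³)) for each 1 ≤ t ≤ d, and hence φ(d) ≤ k·(1 − 1/(2k³))^d. -/

import Mathlib

open Finset

variable {ι : Type*} [Fintype ι] [DecidableEq ι]

/-- `x` with its `i`-th bit flipped. -/
def flipAt (x : ι → Bool) (i : ι) : ι → Bool := Function.update x i (!x i)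

/-- `S` is a certificate for `f`'s value at `x`. -/
def IsCert (f : (ι → Bool) → Bool) (x : ι → Bool) (S : Finset ι) : Prop :=
  ∀ y : ι → Bool, (∀ i ∈ S, y i = x i) → f y = f x

/-- Certificate complexity of `f` at `x`: minimum size of a certificate. -/
noncomputable def certAt (f : (ι → Bool) → Bool) (x : ι → Bool) : ℕ :=
  sInf {k | ∃ S : Finset ι, IsCert f x S ∧ S.card = k}

/-- Certificate complexity of `f`. -/
noncomputable def certC (f : (ι → Bool) → Bool) : ℕ :=
  sSup {k | ∃ x : ι → Bool, certAt f x = k}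

/-- Influence of coordinate `i` on `f` (uniform distribution). -/
noncomputable def influence (f : (ι → Bool) → Bool) (i : ι) : ℝ :=
  ((univ.filter fun x : ι → Bool => f (flipAt x i) ≠ f x).card : ℝ) / 2 ^ Fintype.card ι

/-- Total influence of `f`. -/
noncomputable def totalInf (f : (ι → Bool) → Bool) : ℝ := ∑ i : ι, influence f i

/-- `Pr_{x uniform}[f(x) = b]`. -/
noncomputable def probEq (f : (ι → Bool) → Bool) (b : Bool) : ℝ :=
  ((univ.filter fun x : ι → Bool => f x = b).card : ℝ) / 2 ^ Fintype.card ι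

/-- Variance of `f`: `Pr[f = 0] * Pr[f = 1]`. -/
noncomputable def fvar (f : (ι → Bool) → Bool) : ℝ := probEq f false * probEq f true


/-- `f` with coordinate `i` fixed to `b` (represented on the full cube). -/
def fixCoord {ι : Type*} [DecidableEq ι] (f : (ι → Bool) → Bool) (i : ι) (b : Bool) :
    (ι → Bool) → Bool :=
  fun x => f (Function.update x i b)

/-- The restriction of `f` along the root-to-node path whose (reversed) bit string is `r`,
in the tree whose query at the node with reversed path `r` is `q r`. -/
def pathRes {ι : Type*} [DecidableEq ι] (f : (ι → Bool) → Bool) (q : List Bool → ι) :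
    List Bool → ((ι → Bool) → Bool)
  | [] => f
  | b :: r => fixCoord (pathRes f q r) (q r) b


/-!
Querying a variable `i` splits `f_v` into two children whose average total influence is
`Inf(f_v) - Inf_i(f_v)`. Restrictions keep certificate complexity `≤ k`, so `f_v` has a decision
tree of depth `≤ C₀ C₁ ≤ k²`, and the OSSS inequality gives
`4 Var(f_v) ≤ k² MaxInf(f_v) ≤ 2 k² Inf_i(f_v)`. Counting sensitive edges from the side of the
rarer value gives `Inf(f_v) ≤ 4 Var(f_v) k`, so `Inf_i(f_v) ≥ Inf(f_v) / (2k³)`: every level of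
the tree removes a `1/(2k³)` fraction of `φ`, and `φ(0) = Inf(f) ≤ k`.
-/

open Function
open scoped BigOperators

section Cube

omit [Fintype ι]

lemma flipAt_flipAt (x : ι → Bool) (i : ι) : flipAt (flipAt x i) i = x := by
  simp [flipAt]

lemma flipAt_involutive (i : ι) : Involutive fun x : ι → Bool => flipAt x i :=
  fun x => flipAt_flipAt x i

@[simp]
lemma update_flipAt_self (x : ι → Bool) (i : ι) (b : Bool) :
    update (flipAt x i) i b = update x i b := by
  simp [flipAt]

lemma flipAt_update_of_ne (x : ι → Bool) {i j : ι} (h : j ≠ i) (b : Bool) :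
    flipAt (update x i b) j = update (flipAt x j) i b := by
  rw [flipAt, flipAt, update_comm h, update_of_ne h]

lemma expect_bool (g : Bool → ℝ) : 𝔼 b, g b = (g false + g true) / 2 := by
  rw [Fintype.expect_eq_sum_div_card, Fintype.sum_bool, Fintype.card_bool]
  push_cast
  ring

lemma expect_update (F : (ι → Bool) → ℝ) (x : ι → Bool) (i : ι) :
    𝔼 b, F (update x i b) = (F x + F (flipAt x i)) / 2 := by
  rw [expect_bool]
  cases hx : x i
  · rw [← hx, update_eq_self, flipAt, hx]
    rfl
  · rw [← hx, update_eq_self, flipAt, hx, add_comm]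
    rfl

end Cube

section Expectation

lemma expect_flipAt (F : (ι → Bool) → ℝ) (i : ι) : 𝔼 x, F (flipAt x i) = 𝔼 x, F x :=
  Fintype.expect_bijective _ (flipAt_involutive i).bijective _ _ fun _ => rfl

lemma expect_expect_update (F : (ι → Bool) → ℝ) (i : ι) :
    𝔼 b, 𝔼 x, F (update x i b) = 𝔼 x, F x := by
  rw [expect_comm]
  simp only [expect_update, ← expect_div, expect_add_distrib, expect_flipAt]
  ring

lemma expect_boole_cube (p : (ι → Bool) → Prop) [DecidablePred p] :
    𝔼 x, (if p x then (1 : ℝ) else 0) = #{x | p x} / 2 ^ Fintype.card ι := by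
  simp [Fintype.expect_eq_sum_div_card, sum_boole]

lemma influence_eq_expect (f : (ι → Bool) → Bool) (i : ι) :
    influence f i = 𝔼 x, if f (flipAt x i) ≠ f x then 1 else 0 :=
  (expect_boole_cube _).symm

lemma probEq_eq_expect (f : (ι → Bool) → Bool) (b : Bool) :
    probEq f b = 𝔼 x, if f x = b then 1 else 0 :=
  (expect_boole_cube _).symm

lemma influence_nonneg (f : (ι → Bool) → Bool) (i : ι) : 0 ≤ influence f i := by
  unfold influence
  positivity

lemma probEq_false_add_probEq_true (f : (ι → Bool) → Bool) :
    probEq f false + probEq f true = 1 := by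
  rw [probEq_eq_expect, probEq_eq_expect, ← expect_add_distrib]
  convert Fintype.expect_one (ι := ι → Bool) (M := ℝ) with x
  cases f x <;> simp

end Expectation

section Restriction

lemma influence_fixCoord_self (f : (ι → Bool) → Bool) (i : ι) (b : Bool) :
    influence (fixCoord f i b) i = 0 := by
  simp [influence_eq_expect, fixCoord]

lemma expect_influence_fixCoord (f : (ι → Bool) → Bool) {i j : ι} (h : j ≠ i) :
    𝔼 b, influence (fixCoord f i b) j = influence f j := by
  simp only [influence_eq_expect, fixCoord, ← flipAt_update_of_ne _ h]
  exact expect_expect_update (fun y => if f (flipAt y j) ≠ f y then 1 else 0) i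

lemma expect_totalInf_fixCoord (f : (ι → Bool) → Bool) (i : ι) :
    𝔼 b, totalInf (fixCoord f i b) = totalInf f - influence f i := by
  simp only [totalInf, expect_sum_comm]
  rw [← add_sum_erase _ _ (mem_univ i), ← add_sum_erase _ _ (mem_univ i)]
  simp only [influence_fixCoord_self, Fintype.expect_const, zero_add, add_sub_cancel_left]
  exact sum_congr rfl fun j hj => expect_influence_fixCoord f (ne_of_mem_erase hj)

end Restriction

section Certificates

/-- `C_b(f) ≤ c`. -/
def CertLE (f : (ι → Bool) → Bool) (b : Bool) (c : ℕ) : Prop :=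
  ∀ x, f x = b → ∃ S : Finset ι, IsCert f x S ∧ #S ≤ c

omit [DecidableEq ι] in
lemma isCert_univ (f : (ι → Bool) → Bool) (x : ι → Bool) : IsCert f x univ :=
  fun _ hy => congrArg f (funext fun j => hy j (mem_univ j))

omit [DecidableEq ι] in
lemma certLE_of_certC_le {f : (ι → Bool) → Bool} {k : ℕ} (hk : certC f ≤ k) (b : Bool) :
    CertLE f b k := by
  intro x _
  have hne : {m | ∃ S : Finset ι, IsCert f x S ∧ #S = m}.Nonempty :=
    ⟨_, univ, isCert_univ f x, rfl⟩
  obtain ⟨S, hS, hcard⟩ := Nat.sInf_mem hne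
  have hbdd : BddAbove {m | ∃ y, certAt f y = m} := by
    refine ⟨Fintype.card ι, ?_⟩
    rintro _ ⟨y, rfl⟩
    exact Nat.sInf_le ⟨univ, isCert_univ f y, card_univ⟩
  exact ⟨S, hS, hcard ▸ (le_csSup hbdd ⟨x, rfl⟩).trans hk⟩

omit [Fintype ι]

lemma IsCert.inter_nonempty {f : (ι → Bool) → Bool} {x y : ι → Bool} {S T : Finset ι}
    (hS : IsCert f x S) (hT : IsCert f y T) (hxy : f x ≠ f y) : (S ∩ T).Nonempty := by
  by_contra hST
  have hdisj : Disjoint S T := disjoint_iff_inter_eq_empty.2 (not_nonempty_iff_eq_empty.1 hST)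
  refine hxy ((hS (S.piecewise x y) fun j hj => S.piecewise_eq_of_mem _ _ hj).symm.trans
    (hT _ fun j hj => S.piecewise_eq_of_notMem _ _ (disjoint_right.1 hdisj hj)))

lemma IsCert.piecewise {f : (ι → Bool) → Bool} {S T : Finset ι} {σ y : ι → Bool}
    (hT : IsCert f (S.piecewise σ y) T) : IsCert (fun x => f (S.piecewise σ x)) y (T \ S) := by
  refine fun w hw => hT _ fun j hj => ?_
  by_cases hjS : j ∈ S
  · simp [hjS]
  · simp [hjS, hw j (mem_sdiff.2 ⟨hj, hjS⟩)]

lemma IsCert.fixCoord {f : (ι → Bool) → Bool} {x : ι → Bool} {S : Finset ι} {i : ι} {b : Bool}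
    (hS : IsCert f (update x i b) S) : IsCert (fixCoord f i b) x (S.erase i) := by
  refine fun y hy => hS _ fun j hj => ?_
  by_cases hji : j = i
  · simp [hji]
  · simp [hji, hy j (mem_erase.2 ⟨hji, hj⟩)]

lemma CertLE.fixCoord {f : (ι → Bool) → Bool} {b : Bool} {c : ℕ} (h : CertLE f b c)
    (i : ι) (b' : Bool) : CertLE (fixCoord f i b') b c := fun _ hx =>
  let ⟨S, hS, hcard⟩ := h _ hx
  ⟨S.erase i, hS.fixCoord, (card_erase_le).trans hcard⟩

lemma CertLE.pathRes {f : (ι → Bool) → Bool} {b : Bool} {c : ℕ} (h : CertLE f b c)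
    (q : List Bool → ι) (r : List Bool) : CertLE (pathRes f q r) b c := by
  induction r with
  | nil => exact h
  | cons b' r ih => exact ih.fixCoord (q r) b'

lemma CertLE.piecewise {f : (ι → Bool) → Bool} {b : Bool} {c : ℕ} (h : CertLE f b c)
    (S : Finset ι) (σ : ι → Bool) : CertLE (fun x => f (S.piecewise σ x)) b c := fun _ hy =>
  let ⟨T, hT, hcard⟩ := h _ hy
  ⟨T \ S, hT.piecewise, (card_le_card sdiff_subset).trans hcard⟩

lemma CertLE.piecewise_of_isCert {f : (ι → Bool) → Bool} {b : Bool} {c : ℕ}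
    (h : CertLE f b (c + 1)) {x : ι → Bool} {S : Finset ι} (hS : IsCert f x S) (hx : f x ≠ b)
    (σ : ι → Bool) : CertLE (fun z => f (S.piecewise σ z)) b c := fun _ hy => by
  obtain ⟨T, hT, hcard⟩ := h _ hy
  have hTS := (hT.inter_nonempty hS (hy.trans_ne hx.symm)).card_pos
  have := card_sdiff_add_card_inter T S
  exact ⟨T \ S, hT.piecewise, by omega⟩

end Certificates

section InfluenceVariance

lemma IsCert.filter_sensitive_subset {f : (ι → Bool) → Bool} {x : ι → Bool} {S : Finset ι}
    (hS : IsCert f x S) : univ.filter (fun j => f (flipAt x j) ≠ f x) ⊆ S := by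
  intro j hj
  by_contra hjS
  refine (mem_filter.1 hj).2 (hS _ fun m hm => ?_)
  rw [flipAt, update_of_ne (ne_of_mem_of_not_mem hm hjS)]

/-- Each sensitive edge has exactly one endpoint with value `b`. -/
lemma influence_eq_two_mul_expect (f : (ι → Bool) → Bool) (j : ι) (b : Bool) :
    influence f j = 2 * 𝔼 x, if f x = b ∧ f (flipAt x j) ≠ f x then 1 else 0 := by
  have hsplit : ∀ x, (if f (flipAt x j) ≠ f x then (1 : ℝ) else 0) =
      (if f x = b ∧ f (flipAt x j) ≠ f x then 1 else 0) +
        if f (flipAt x j) = b ∧ f x ≠ f (flipAt x j) then 1 else 0 := by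
    intro x
    cases f x <;> cases f (flipAt x j) <;> cases b <;> simp
  have hflip := expect_flipAt (fun x => if f x = b ∧ f (flipAt x j) ≠ f x then (1 : ℝ) else 0) j
  simp only [flipAt_flipAt] at hflip
  rw [influence_eq_expect, expect_congr rfl fun x _ => hsplit x, expect_add_distrib, hflip]
  ring

lemma totalInf_le_two_mul_probEq_mul {f : (ι → Bool) → Bool} {b : Bool} {c : ℕ}
    (h : CertLE f b c) : totalInf f ≤ 2 * probEq f b * c := by
  have hpt : ∀ x, ∑ j, (if f x = b ∧ f (flipAt x j) ≠ f x then (1 : ℝ) else 0) ≤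
      if f x = b then (c : ℝ) else 0 := by
    intro x
    by_cases hx : f x = b
    · obtain ⟨S, hS, hcard⟩ := h x hx
      simp only [and_iff_right hx, if_pos hx, sum_boole]
      exact_mod_cast (card_le_card hS.filter_sensitive_subset).trans hcard
    · simp [hx]
  calc totalInf f = 2 * 𝔼 x, ∑ j, (if f x = b ∧ f (flipAt x j) ≠ f x then (1 : ℝ) else 0) := by
        simp only [totalInf, influence_eq_two_mul_expect f _ b, ← mul_sum, expect_sum_comm]
    _ ≤ 2 * 𝔼 x, (if f x = b then (c : ℝ) else 0) := by
        gcongr with x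
        exact hpt x
    _ = 2 * probEq f b * c := by
        simp only [probEq_eq_expect, expect_mul, ite_mul, one_mul, zero_mul, mul_assoc]

lemma totalInf_le_four_mul_fvar_mul {f : (ι → Bool) → Bool} {c : ℕ}
    (h : ∀ b, CertLE f b c) : totalInf f ≤ 4 * fvar f * c := by
  have h₀ := totalInf_le_two_mul_probEq_mul (h false)
  have h₁ := totalInf_le_two_mul_probEq_mul (h true)
  have hsum := probEq_false_add_probEq_true f
  have hp₀ : 0 ≤ probEq f false := by rw [probEq_eq_expect]; positivity
  have hp₁ : 0 ≤ probEq f true := by rw [probEq_eq_expect]; positivity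
  have hc : (0 : ℝ) ≤ c := c.cast_nonneg
  unfold fvar
  -- `min p₀ p₁ ≤ 2 p₀ p₁` because `max p₀ p₁ ≥ 1/2`
  rcases le_total (probEq f false) (probEq f true) with hle | hle
  · nlinarith [mul_nonneg (mul_nonneg hp₀ hc) (by linarith : 0 ≤ 2 * probEq f true - 1)]
  · nlinarith [mul_nonneg (mul_nonneg hp₁ hc) (by linarith : 0 ≤ 2 * probEq f false - 1)]

lemma fvar_le_one_quarter (f : (ι → Bool) → Bool) : fvar f ≤ 1 / 4 := by
  have hsum := probEq_false_add_probEq_true f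
  unfold fvar
  nlinarith [sq_nonneg (probEq f false - probEq f true)]

lemma totalInf_le_of_certLE {f : (ι → Bool) → Bool} {c : ℕ} (h : ∀ b, CertLE f b c) :
    totalInf f ≤ c := by
  have := totalInf_le_four_mul_fvar_mul h
  nlinarith [fvar_le_one_quarter f, c.cast_nonneg (α := ℝ)]

end InfluenceVariance

section DecisionTree

omit [Fintype ι]

inductive TreeDepthLE : ((ι → Bool) → Bool) → ℕ → Prop
  | const {f : (ι → Bool) → Bool} {d : ℕ} (b : Bool) (hf : ∀ x, f x = b) : TreeDepthLE f d
  | query {f : (ι → Bool) → Bool} {d : ℕ} (i : ι) (h₀ : TreeDepthLE (fixCoord f i false) d)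
      (h₁ : TreeDepthLE (fixCoord f i true) d) : TreeDepthLE f (d + 1)

lemma TreeDepthLE.mono {f : (ι → Bool) → Bool} {d e : ℕ} (h : TreeDepthLE f d) (hde : d ≤ e) :
    TreeDepthLE f e := by
  induction h generalizing e with
  | const b hf => exact .const b hf
  | query i _ _ ih₀ ih₁ =>
    obtain ⟨e, rfl⟩ : ∃ e', e = e' + 1 := ⟨e - 1, by omega⟩
    exact .query i (ih₀ (by omega)) (ih₁ (by omega))

/-- Query the coordinates of `S` first. -/
lemma TreeDepthLE.of_piecewise {f : (ι → Bool) → Bool} {d : ℕ} (S : Finset ι)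
    (h : ∀ σ, TreeDepthLE (fun x => f (S.piecewise σ x)) d) : TreeDepthLE f (#S + d) := by
  induction S using Finset.induction_on generalizing f with
  | empty => simpa using h (fun _ => false)
  | insert i S hi ih =>
    rw [card_insert_of_notMem hi, add_right_comm]
    refine .query i (ih fun σ => ?_) (ih fun σ => ?_) <;>
    · convert h (update σ i _) using 2 with x
      rw [piecewise_insert, update_self, fixCoord,
        S.piecewise_congr (fun j hj => update_of_ne (ne_of_mem_of_not_mem hj hi) _ _)
          fun _ _ => rfl]

/-- `D(f) ≤ C₀(f) C₁(f)`: fixing a `1`-certificate lowers `C₀` of every restriction. -/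
theorem TreeDepthLE.of_certLE {f : (ι → Bool) → Bool} {c₀ c₁ : ℕ} (h₀ : CertLE f false c₀)
    (h₁ : CertLE f true c₁) : TreeDepthLE f (c₀ * c₁) := by
  induction c₀ generalizing f with
  | zero =>
    by_cases hex : ∃ x, f x = false
    · obtain ⟨x, hx⟩ := hex
      obtain ⟨S, hS, hcard⟩ := h₀ x hx
      rw [card_eq_zero.1 (Nat.le_zero.1 hcard)] at hS
      exact .const (f x) fun y => hS y (by simp)
    · exact .const true fun x => by simpa using not_exists.1 hex x
  | succ m ih =>
    by_cases hex : ∃ x, f x = true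
    · obtain ⟨x, hx⟩ := hex
      obtain ⟨S, hS, hcard⟩ := h₁ x hx
      have hbranch σ : TreeDepthLE (fun y => f (S.piecewise σ y)) (m * c₁) :=
        ih (h₀.piecewise_of_isCert hS (by simp [hx]) σ) (h₁.piecewise S σ)
      exact (TreeDepthLE.of_piecewise S hbranch).mono (by rw [Nat.succ_mul]; omega)
    · exact .const false fun x => by simpa using not_exists.1 hex x

end DecisionTree

section OSSS

def signed (f : (ι → Bool) → Bool) (x : ι → Bool) : ℝ := if f x then 1 else -1

noncomputable def cubeCov (F g : (ι → Bool) → ℝ) : ℝ := 𝔼 x, F x * g x - (𝔼 x, F x) * 𝔼 x, g x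

noncomputable def coordAvg (g : (ι → Bool) → ℝ) (i : ι) (x : ι → Bool) : ℝ := 𝔼 b, g (update x i b)

omit [Fintype ι] in
@[simp]
lemma coordAvg_update (g : (ι → Bool) → ℝ) (i : ι) (x : ι → Bool) (b : Bool) :
    coordAvg g i (update x i b) = coordAvg g i x := by
  simp [coordAvg]

omit [Fintype ι] in
lemma sub_coordAvg (g : (ι → Bool) → ℝ) (i : ι) (x : ι → Bool) :
    g x - coordAvg g i x = (g x - g (flipAt x i)) / 2 := by
  rw [coordAvg, expect_update]
  ring

lemma expect_coordAvg (g : (ι → Bool) → ℝ) (i : ι) : 𝔼 x, coordAvg g i x = 𝔼 x, g x := by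
  rw [← expect_expect_update g i]
  exact expect_comm _ _ _

lemma expect_abs_sub_coordAvg_le (g : (ι → Bool) → ℝ) (i j : ι) :
    𝔼 x, |coordAvg g i (flipAt x j) - coordAvg g i x| ≤ 𝔼 x, |g (flipAt x j) - g x| := by
  by_cases hji : j = i
  · subst hji
    simp only [flipAt, coordAvg_update, sub_self, abs_zero, expect_const_zero]
    positivity
  calc 𝔼 x, |coordAvg g i (flipAt x j) - coordAvg g i x|
      = 𝔼 x, |𝔼 b, (g (flipAt (update x i b) j) - g (update x i b))| := by
        simp only [coordAvg, expect_sub_distrib, flipAt_update_of_ne _ hji]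
    _ ≤ 𝔼 x, 𝔼 b, |g (flipAt (update x i b) j) - g (update x i b)| := by
        gcongr
        exact abs_expect_le _ _
    _ = 𝔼 x, |g (flipAt x j) - g x| := by
        rw [expect_comm]
        exact expect_expect_update (fun y => |g (flipAt y j) - g y|) i

lemma cubeCov_of_forall_eq {F : (ι → Bool) → ℝ} {c : ℝ} (hF : ∀ x, F x = c)
    (g : (ι → Bool) → ℝ) : cubeCov F g = 0 := by
  simp [cubeCov, hF, ← mul_expect]

lemma cubeCov_eq_add_coordAvg (F g : (ι → Bool) → ℝ) (i : ι) :
    cubeCov F g = 𝔼 x, F x * (g x - coordAvg g i x) + cubeCov F (coordAvg g i) := by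
  simp only [cubeCov, mul_sub, expect_sub_distrib, expect_coordAvg]
  ring

lemma cubeCov_eq_expect_update (F : (ι → Bool) → ℝ) {u : (ι → Bool) → ℝ} {i : ι}
    (hu : ∀ x b, u (update x i b) = u x) :
    cubeCov F u = 𝔼 b, cubeCov (fun x => F (update x i b)) u := by
  simp only [cubeCov, expect_sub_distrib, ← expect_mul]
  rw [← expect_expect_update (fun x => F x * u x) i, expect_expect_update F i]
  simp only [hu]

/-- The O'Donnell–Saks–Schramm–Servedio inequality. At a query of `i`, split `g` into its
average over `x_i`, which the two subtrees handle, and a remainder of size `|∂_i g| / 2`. -/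
theorem abs_cubeCov_signed_le {f : (ι → Bool) → Bool} {d : ℕ} (hf : TreeDepthLE f d)
    {M : ℝ} (hM : 0 ≤ M) {g : (ι → Bool) → ℝ}
    (hg : ∀ j, 𝔼 x, |g (flipAt x j) - g x| ≤ M) : |cubeCov (signed f) g| ≤ d * M / 2 := by
  induction hf generalizing g with
  | const b hf =>
    rw [cubeCov_of_forall_eq (c := if b then 1 else -1) (fun x => by simp [signed, hf]) g,
      abs_zero]
    positivity
  | @query f d i _ _ ih₀ ih₁ =>
    have hbranch : ∀ b, |cubeCov (signed (fixCoord f i b)) (coordAvg g i)| ≤ d * M / 2 := by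
      have hg' j := (expect_abs_sub_coordAvg_le g i j).trans (hg j)
      rintro (_ | _)
      exacts [ih₀ hg', ih₁ hg']
    have hlocal : |𝔼 x, signed f x * (g x - coordAvg g i x)| ≤ M / 2 := by
      calc |𝔼 x, signed f x * (g x - coordAvg g i x)|
          ≤ 𝔼 x, |signed f x * (g x - coordAvg g i x)| := abs_expect_le _ _
        _ ≤ 𝔼 x, |g (flipAt x i) - g x| / 2 := by
          gcongr with x
          rw [abs_mul, sub_coordAvg, abs_div, abs_two, abs_sub_comm]
          have : |signed f x| = 1 := by unfold signed; split <;> simp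
          simp [this]
        _ ≤ M / 2 := by
          rw [← expect_div]
          linarith [hg i]
    rw [cubeCov_eq_add_coordAvg _ _ i, cubeCov_eq_expect_update _ (coordAvg_update g i)]
    calc _ ≤ M / 2 + 𝔼 b, |cubeCov (signed (fixCoord f i b)) (coordAvg g i)| :=
          (abs_add_le _ _).trans (add_le_add hlocal (abs_expect_le _ _))
      _ ≤ M / 2 + d * M / 2 := by
          gcongr
          exact expect_le univ_nonempty fun b _ => hbranch b
      _ = ↑(d + 1) * M / 2 := by push_cast; ring

lemma cubeCov_signed_self (f : (ι → Bool) → Bool) :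
    cubeCov (signed f) (signed f) = 4 * fvar f := by
  have hsq : ∀ x, signed f x * signed f x = 1 := fun x => by unfold signed; split <;> simp
  have hexp : 𝔼 x, signed f x = probEq f true - probEq f false := by
    rw [probEq_eq_expect, probEq_eq_expect, ← expect_sub_distrib]
    exact expect_congr rfl fun x _ => by unfold signed; cases f x <;> simp
  have hsum := probEq_false_add_probEq_true f
  rw [cubeCov, hexp, expect_congr rfl fun x _ => hsq x, Fintype.expect_one, fvar]
  nlinarith

lemma expect_abs_sub_signed (f : (ι → Bool) → Bool) (j : ι) :
    𝔼 x, |signed f (flipAt x j) - signed f x| = 2 * influence f j := by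
  rw [influence_eq_expect, mul_expect]
  exact expect_congr rfl fun x _ => by
    unfold signed; cases f x <;> cases f (flipAt x j) <;> norm_num

theorem four_mul_fvar_le {f : (ι → Bool) → Bool} {d : ℕ} (hf : TreeDepthLE f d) {W : ℝ}
    (hW : 0 ≤ W) (h : ∀ j, influence f j ≤ W) : 4 * fvar f ≤ d * W := by
  have := abs_cubeCov_signed_le hf (by positivity : 0 ≤ 2 * W) (g := signed f)
    fun j => by rw [expect_abs_sub_signed]; linarith [h j]
  rw [cubeCov_signed_self] at this
  linarith [le_abs_self (4 * fvar f)]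

end OSSS

section Tree

/-- `Inf ≤ 4 Var · k` and, since `D ≤ C₀ C₁ ≤ k²`, `4 Var ≤ k² · MaxInf ≤ 2k² Inf_i`. -/
theorem totalInf_le_of_influence_le {f : (ι → Bool) → Bool} {k : ℕ} (hk : ∀ b, CertLE f b k)
    {i : ι} (hi : ∀ j, influence f j ≤ 2 * influence f i) :
    totalInf f ≤ 2 * k ^ 3 * influence f i := by
  have hvar := four_mul_fvar_le (TreeDepthLE.of_certLE (hk false) (hk true))
    (by linarith [influence_nonneg f i]) hi
  calc totalInf f ≤ 4 * fvar f * k := totalInf_le_four_mul_fvar_mul hk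
    _ ≤ ↑(k * k) * (2 * influence f i) * k := by gcongr
    _ = 2 * k ^ 3 * influence f i := by push_cast; ring

lemma totalInf_sub_influence_le {f : (ι → Bool) → Bool} {k : ℕ} (hk : ∀ b, CertLE f b k)
    {i : ι} (hi : ∀ j, influence f j ≤ 2 * influence f i) :
    totalInf f - influence f i ≤ totalInf f * (1 - 1 / (2 * k ^ 3)) := by
  have : totalInf f / (2 * k ^ 3) ≤ influence f i :=
    div_le_of_le_mul₀ (by positivity) (influence_nonneg f i)
      ((totalInf_le_of_influence_le hk hi).trans_eq (mul_comm _ _))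
  rw [mul_sub, mul_one, mul_one_div]
  linarith

-- `k = 0` is allowed: then `1 / (2 * k ^ 3) = 0`.
lemma one_div_two_mul_cube_le_one (k : ℕ) : 1 / (2 * (k : ℝ) ^ 3) ≤ 1 := by
  rcases k.eq_zero_or_pos with rfl | hk
  · norm_num
  · have : (1 : ℝ) ≤ k := by exact_mod_cast hk
    exact div_le_one_of_le₀ (by nlinarith [one_le_pow₀ (n := 3) this]) (by positivity)

/-- The paper's `φ(t)`. -/
noncomputable def avgTotalInf (f : (ι → Bool) → Bool) (q : List Bool → ι) (t : ℕ) : ℝ :=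
  𝔼 v : Fin t → Bool, totalInf (pathRes f q (List.ofFn v))

lemma avgTotalInf_eq_sum_div (f : (ι → Bool) → Bool) (q : List Bool → ι) (t : ℕ) :
    avgTotalInf f q t = (∑ v : Fin t → Bool, totalInf (pathRes f q (List.ofFn v))) / 2 ^ t := by
  simp [avgTotalInf, Fintype.expect_eq_sum_div_card]

lemma avgTotalInf_zero (f : (ι → Bool) → Bool) (q : List Bool → ι) :
    avgTotalInf f q 0 = totalInf f := by
  simp [avgTotalInf_eq_sum_div, pathRes]

lemma avgTotalInf_succ (f : (ι → Bool) → Bool) (q : List Bool → ι) (t : ℕ) :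
    avgTotalInf f q (t + 1) = 𝔼 w : Fin t → Bool,
      𝔼 b, totalInf (fixCoord (pathRes f q (List.ofFn w)) (q (List.ofFn w)) b) := by
  rw [avgTotalInf, Fintype.expect_equiv (Fin.consEquiv fun _ => Bool).symm _
    (fun p => totalInf (pathRes f q (p.1 :: List.ofFn p.2))) fun v => by rw [List.ofFn_succ]; rfl,
    ← univ_product_univ, expect_product, expect_comm]
  rfl

theorem avgTotalInf_succ_le {f : (ι → Bool) → Bool} {k : ℕ} (hk : ∀ b, CertLE f b k)
    {q : List Bool → ι} {t : ℕ} (hq : ∀ r : List Bool, r.length = t →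
      ∀ j, influence (pathRes f q r) j ≤ 2 * influence (pathRes f q r) (q r)) :
    avgTotalInf f q (t + 1) ≤ avgTotalInf f q t * (1 - 1 / (2 * k ^ 3)) := by
  rw [avgTotalInf_succ, avgTotalInf, expect_mul]
  gcongr with w
  rw [expect_totalInf_fixCoord]
  exact totalInf_sub_influence_le (fun b => (hk b).pathRes q _) (hq _ List.length_ofFn)

end Tree

theorem stmt19 {ι : Type*} [Fintype ι] [DecidableEq ι] (f : (ι → Bool) → Bool) (k d : ℕ)
    (hk : certC f ≤ k) (q : List Bool → ι)
    (hq : ∀ r : List Bool, r.length < d →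
      ∀ j : ι, influence (pathRes f q r) j ≤ 2 * influence (pathRes f q r) (q r)) :
    let Φ : ℕ → ℝ := fun t =>
      (∑ v : Fin t → Bool, totalInf (pathRes f q (List.ofFn v))) / 2 ^ t
    (∀ t : ℕ, 1 ≤ t → t ≤ d → Φ t ≤ Φ (t - 1) * (1 - 1 / (2 * k ^ 3))) ∧
      Φ d ≤ k * (1 - 1 / (2 * k ^ 3)) ^ d := by
  intro Φ
  have hΦ t : Φ t = avgTotalInf f q t := (avgTotalInf_eq_sum_div f q t).symm
  have hcert := certLE_of_certC_le hk
  have hstep t (ht : t < d) : Φ (t + 1) ≤ Φ t * (1 - 1 / (2 * k ^ 3)) := by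
    rw [hΦ, hΦ]
    exact avgTotalInf_succ_le hcert fun r hr => hq r (hr ▸ ht)
  have hρ : (0 : ℝ) ≤ 1 - 1 / (2 * k ^ 3) := sub_nonneg.2 (one_div_two_mul_cube_le_one k)
  refine ⟨fun t ht1 htd => ?_, ?_⟩
  · obtain ⟨s, rfl⟩ := Nat.exists_eq_add_of_le' ht1
    exact hstep s (by omega)
  · calc Φ d ≤ (1 - 1 / (2 * k ^ 3)) ^ d * Φ 0 :=
          le_geom hρ d fun t ht => (hstep t ht).trans_eq (mul_comm _ _)
      _ ≤ (1 - 1 / (2 * k ^ 3)) ^ d * k := by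
        gcongr
        rw [hΦ, avgTotalInf_zero]
        exact totalInf_le_of_certLE hcert
      _ = k * (1 - 1 / (2 * k ^ 3)) ^ d := mul_comm _ _
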